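/- Let H be a horoball in a CAT(-1) space X with point at infinity ξ, let c₀(∞) = 4.056, and let a, b ∈ ∂H with d(a,b) ≥ c₀(∞). Then every point a₀ on the geodesic segment [a,b] lies in the shrunk horoball H[(2/3)·min{d(a₀,a), d(a₀,b)}]. -/

import Mathlib

open Filter Set Metric

/-- `γ` is an isometric (unit-speed geodesic) map on the parameter set `D`. -/
def IsGeodOn {X : Type*} [MetricSpace X] (γ : ℝ → X) (D : Set ℝ) : Prop :=
  ∀ s ∈ D, ∀ t ∈ D, dist (γ s) (γ t) = |s - t|

/-- A geodesic segment from `x` to `y`, parametrized by arclength on `[0, dist x y]`. -/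
def IsGeodesicFrom {X : Type*} [MetricSpace X] (γ : ℝ → X) (x y : X) : Prop :=
  IsGeodOn γ (Set.Icc 0 (dist x y)) ∧ γ 0 = x ∧ γ (dist x y) = y

/-- A geodesic metric space: any two points are joined by a geodesic segment. -/
def GeodesicSpace (X : Type*) [MetricSpace X] : Prop :=
  ∀ x y : X, ∃ γ : ℝ → X, IsGeodesicFrom γ x y

/-- The CAT(-1) comparison property: distances in a geodesic triangle are bounded by the
corresponding distances in a comparison triangle in the hyperbolic plane `UpperHalfPlane`
(of curvature -1). -/
def CATNegOne (X : Type*) [MetricSpace X] : Prop :=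
  ∀ (x y z : X) (f g : ℝ → X), IsGeodesicFrom f x y → IsGeodesicFrom g x z →
  ∀ (x' y' z' : UpperHalfPlane), dist x' y' = dist x y → dist x' z' = dist x z →
    dist y' z' = dist y z →
  ∀ (f' g' : ℝ → UpperHalfPlane), IsGeodesicFrom f' x' y' → IsGeodesicFrom g' x' z' →
  ∀ s ∈ Set.Icc (0:ℝ) (dist x y), ∀ t ∈ Set.Icc (0:ℝ) (dist x z),
    dist (f s) (g t) ≤ dist (f' s) (g' t)

/-- A subset is (geodesically) convex if it contains every geodesic segment between
two of its points. -/
def MGeodConvex {X : Type*} [MetricSpace X] (C : Set X) : Prop :=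
  ∀ x ∈ C, ∀ y ∈ C, ∀ γ : ℝ → X, IsGeodesicFrom γ x y →
    ∀ t ∈ Set.Icc 0 (dist x y), γ t ∈ C

/-- The parameter domain of a geodesic segment or ray starting at time `0`. -/
def SegOrRayFrom (D : Set ℝ) : Prop :=
  (∃ L : ℝ, 0 ≤ L ∧ D = Set.Icc 0 L) ∨ D = Set.Ici 0

/-- Two geodesic lines have the same point at infinity in the negative direction
(their negative rays are at finite Hausdorff distance). -/
def AsympNeg {X : Type*} [MetricSpace X] (γ γ' : ℝ → X) : Prop :=
  ∃ C : ℝ, (∀ t ≤ (0:ℝ), ∃ s ≤ (0:ℝ), dist (γ t) (γ' s) ≤ C) ∧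
    (∀ s ≤ (0:ℝ), ∃ t ≤ (0:ℝ), dist (γ' s) (γ t) ≤ C)

section Helpers

open Real

lemma hyp_cosh_dist (z w : UpperHalfPlane) :
    Real.cosh (dist z w) =
      1 + ((z.re - w.re)^2 + (z.im - w.im)^2) / (2 * z.im * w.im) := by
  rw [UpperHalfPlane.cosh_dist, Complex.dist_eq_re_im, Real.sq_sqrt (by positivity)]
  norm_num

lemma hyp_dist_eq_of_cosh {z w : UpperHalfPlane} {d : ℝ} (hd : 0 ≤ d)
    (h : Real.cosh (dist z w) = Real.cosh d) : dist z w = d :=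
  Real.cosh_strictMonoOn.injOn (Set.mem_Ici.2 dist_nonneg) (Set.mem_Ici.2 hd) h

noncomputable def arc (c r : ℝ) (hr : 0 < r) (τ : ℝ) : UpperHalfPlane :=
  UpperHalfPlane.mk ⟨c + r * Real.tanh τ, r / Real.cosh τ⟩ (by
    have := Real.cosh_pos τ
    show (0:ℝ) < r / Real.cosh τ
    positivity)

@[simp] lemma arc_re (c r : ℝ) (hr : 0 < r) (τ : ℝ) : (arc c r hr τ).re = c + r * Real.tanh τ := rfl
@[simp] lemma arc_im (c r : ℝ) (hr : 0 < r) (τ : ℝ) : (arc c r hr τ).im = r / Real.cosh τ := rfl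

lemma arc_dist (c r : ℝ) (hr : 0 < r) (σ τ : ℝ) :
    dist (arc c r hr σ) (arc c r hr τ) = |σ - τ| := by
  apply hyp_dist_eq_of_cosh (abs_nonneg _)
  rw [hyp_cosh_dist, Real.cosh_abs, Real.cosh_sub]
  simp only [arc_re, arc_im, Real.tanh_eq_sinh_div_cosh]
  have hcσ := Real.cosh_pos σ
  have hcτ := Real.cosh_pos τ
  have e1 := Real.cosh_sq_sub_sinh_sq σ
  have e2 := Real.cosh_sq_sub_sinh_sq τ
  field_simp
  linear_combination (-(r^2*Real.cosh τ^2)) * e1 + (-(r^2*Real.cosh σ^2)) * e2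

lemma geod_from_global {X : Type*} [MetricSpace X] (φ : ℝ → X)
    (hφ : ∀ σ τ : ℝ, dist (φ σ) (φ τ) = |σ - τ|) (τ₁ τ₂ : ℝ) (z w : X)
    (h1 : φ τ₁ = z) (h2 : φ τ₂ = w) : ∃ γ, IsGeodesicFrom γ z w := by
  set e : ℝ := if τ₁ ≤ τ₂ then 1 else -1 with he
  have habs : ∀ t : ℝ, |e * t| = |t| := by
    intro t; rw [abs_mul, he]
    rcases le_or_gt τ₁ τ₂ with h | h
    · rw [if_pos h]; simp
    · rw [if_neg (not_le.2 h)]; simp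
  have hdzw : dist z w = |τ₁ - τ₂| := by rw [← h1, ← h2, hφ]
  refine ⟨fun t => φ (τ₁ + e * t), ?_, ?_, ?_⟩
  · intro s _ t _
    rw [hφ]
    have : τ₁ + e * s - (τ₁ + e * t) = e * (s - t) := by ring
    rw [this, habs]
  · simp [h1]
  · have : τ₁ + e * dist z w = τ₂ := by
      rw [hdzw, he]
      rcases le_or_gt τ₁ τ₂ with h | h
      · rw [if_pos h, abs_of_nonpos (by linarith)]; ring
      · rw [if_neg (not_le.2 h), abs_of_nonneg (by linarith)]; ring
    show φ (τ₁ + e * dist z w) = w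
    rw [this, h2]

noncomputable def vpt' (a t : ℝ) : UpperHalfPlane :=
  UpperHalfPlane.mk ⟨a, Real.exp t⟩ (Real.exp_pos t)

@[simp] lemma vpt'_re (a t : ℝ) : (vpt' a t).re = a := rfl
@[simp] lemma vpt'_im (a t : ℝ) : (vpt' a t).im = Real.exp t := rfl

lemma vpt'_dist (a s t : ℝ) : dist (vpt' a s) (vpt' a t) = |s - t| := by
  have := (UpperHalfPlane.isometry_vertical_line a).dist_eq s t
  simpa [Real.dist_eq, vpt', UpperHalfPlane.mk] using this

lemma arc_eq_self (c r : ℝ) (hr : 0 < r) (z : UpperHalfPlane)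
    (hz : (z.re - c)^2 + z.im^2 = r^2) :
    arc c r hr (Real.log ((r + (z.re - c)) / z.im)) = z := by
  have him := z.im_pos
  have hx : |z.re - c| < r := by
    rw [abs_lt]; constructor <;> nlinarith
  have h1 : 0 < r + (z.re - c) := by have := (abs_lt.1 hx).1; linarith
  have hq : 0 < (r + (z.re - c)) / z.im := by positivity
  set τ := Real.log ((r + (z.re - c)) / z.im) with hτ
  have he : Real.exp τ = (r + (z.re - c)) / z.im := Real.exp_log hq
  have hen : Real.exp (-τ) = (r - (z.re - c)) / z.im := by
    rw [Real.exp_neg, he, inv_div, div_eq_div_iff h1.ne' him.ne']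
    nlinarith
  have hcosh : Real.cosh τ = r / z.im := by
    rw [Real.cosh_eq, he, hen]; field_simp; ring
  have hsinh : Real.sinh τ = (z.re - c) / z.im := by
    rw [Real.sinh_eq, he, hen]; field_simp; ring
  have htanh : Real.tanh τ = (z.re - c) / r := by
    rw [Real.tanh_eq_sinh_div_cosh, hcosh, hsinh]
    field_simp
  apply UpperHalfPlane.ext'
  · rw [arc_re, htanh]; field_simp; ring
  · rw [arc_im, hcosh]; field_simp

lemma exists_geodesic (z w : UpperHalfPlane) : ∃ γ, IsGeodesicFrom γ z w := by
  by_cases hre : z.re = w.re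
  · apply geod_from_global (vpt' z.re) (vpt'_dist z.re) (Real.log z.im) (Real.log w.im) z w
    · apply UpperHalfPlane.ext'
      · rfl
      · simp [Real.exp_log z.im_pos]
    · apply UpperHalfPlane.ext'
      · exact hre
      · simp [Real.exp_log w.im_pos]
  · set c : ℝ := ((z.re^2 + z.im^2) - (w.re^2 + w.im^2)) / (2 * (z.re - w.re)) with hc
    have hzw : (z.re - c)^2 + z.im^2 = (w.re - c)^2 + w.im^2 := by
      have hne : z.re - w.re ≠ 0 := sub_ne_zero.2 hre
      rw [hc]
      field_simp
      ring
    set r : ℝ := Real.sqrt ((z.re - c)^2 + z.im^2) with hrdef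
    have hr : 0 < r := Real.sqrt_pos.2 (by positivity)
    have hz2 : (z.re - c)^2 + z.im^2 = r^2 := (Real.sq_sqrt (by positivity)).symm
    have hw2 : (w.re - c)^2 + w.im^2 = r^2 := by rw [← hzw]; exact hz2
    exact geod_from_global (arc c r hr) (arc_dist c r hr) _ _ z w
      (arc_eq_self c r hr z hz2) (arc_eq_self c r hr w hw2)

lemma interp (z' : UpperHalfPlane) (D u p q : ℝ) (hD : 0 < D)
    (hp : dist (vpt' 0 0) z' = p) (hq : dist (vpt' 0 D) z' = q) :
    Real.cosh (dist (vpt' 0 u) z') =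
      (Real.sinh (D - u) * Real.cosh p + Real.sinh u * Real.cosh q) / Real.sinh D := by
  have hsD : 0 < Real.sinh D := Real.sinh_pos_iff.2 hD
  have him : 0 < z'.im := z'.im_pos
  have hP : 2 * z'.im * Real.cosh p = z'.re^2 + z'.im^2 + 1 := by
    rw [← hp, hyp_cosh_dist]
    simp only [vpt'_re, vpt'_im, Real.exp_zero]
    field_simp
    ring
  have hQ : 2 * z'.im * Real.exp D * Real.cosh q = z'.re^2 + z'.im^2 + (Real.exp D)^2 := by
    rw [← hq, hyp_cosh_dist]
    simp only [vpt'_re, vpt'_im]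
    field_simp [(Real.exp_pos D).ne']
    ring
  rw [hyp_cosh_dist]
  simp only [vpt'_re, vpt'_im]
  rw [eq_div_iff hsD.ne']
  rw [Real.sinh_eq, Real.sinh_eq, Real.sinh_eq, neg_sub, Real.exp_sub, Real.exp_sub,
    Real.exp_neg, Real.exp_neg]
  have ha := Real.exp_pos u
  have hb := Real.exp_pos D
  field_simp
  linear_combination (-((Real.exp D)^2 - (Real.exp u)^2)) * hP +
    (-((Real.exp u)^2 - 1)) * hQ

noncomputable def zeta (p : ℝ) (hp : 0 ≤ p) (θ : ℝ) : UpperHalfPlane :=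
  UpperHalfPlane.mk ⟨Real.sinh p * Real.cos θ, Real.cosh p + Real.sinh p * Real.sin θ⟩ (by
    have hs : 0 ≤ Real.sinh p := Real.sinh_nonneg_iff.2 hp
    have h1 : Real.sinh p * (-1) ≤ Real.sinh p * Real.sin θ :=
      mul_le_mul_of_nonneg_left (Real.neg_one_le_sin θ) hs
    have h2 : Real.cosh p - Real.sinh p = Real.exp (-p) := Real.cosh_sub_sinh p
    have h3 := Real.exp_pos (-p)
    show (0:ℝ) < Real.cosh p + Real.sinh p * Real.sin θ
    nlinarith)

lemma zeta_im_pos (p : ℝ) (hp : 0 ≤ p) (θ : ℝ) :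
    0 < Real.cosh p + Real.sinh p * Real.sin θ := (zeta p hp θ).2

lemma exists_comp (D p q : ℝ) (hp : 0 ≤ p) (hq : 0 ≤ q)
    (h1 : q ≤ D + p) (h2 : D - p ≤ q) (h3 : p - D ≤ q) :
    ∃ z' : UpperHalfPlane, dist (vpt' 0 0) z' = p ∧ dist (vpt' 0 D) z' = q := by
  have hDp : 0 ≤ D + p := by linarith
  have hC1 : ∀ θ, Real.cosh (dist (vpt' 0 0) (zeta p hp θ)) = Real.cosh p := by
    intro θ
    rw [hyp_cosh_dist]
    show 1 + ((0 - Real.sinh p * Real.cos θ)^2 +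
        (Real.exp 0 - (Real.cosh p + Real.sinh p * Real.sin θ))^2) /
        (2 * Real.exp 0 * (Real.cosh p + Real.sinh p * Real.sin θ)) = Real.cosh p
    have him := zeta_im_pos p hp θ
    have e1 := Real.cosh_sq_sub_sinh_sq p
    have e2 := Real.sin_sq_add_cos_sq θ
    rw [Real.exp_zero]
    field_simp
    linear_combination (-(1:ℝ))*e1 + (Real.sinh p)^2 * e2
  set G : ℝ → ℝ := fun θ => 1 + ((0 - Real.sinh p * Real.cos θ)^2 +
      (Real.exp D - (Real.cosh p + Real.sinh p * Real.sin θ))^2) /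
      (2 * Real.exp D * (Real.cosh p + Real.sinh p * Real.sin θ)) with hGdef
  have hG : ∀ θ, Real.cosh (dist (vpt' 0 D) (zeta p hp θ)) = G θ := by
    intro θ; rw [hyp_cosh_dist]; rfl
  have hGcont : Continuous G := by
    apply continuous_const.add
    apply Continuous.div (by fun_prop) (by fun_prop)
    intro θ
    have := zeta_im_pos p hp θ
    positivity
  have htop : zeta p hp (Real.pi/2) = vpt' 0 p := by
    apply UpperHalfPlane.ext'
    · show Real.sinh p * Real.cos (Real.pi/2) = 0
      rw [Real.cos_pi_div_two, mul_zero]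
    · show Real.cosh p + Real.sinh p * Real.sin (Real.pi/2) = Real.exp p
      rw [Real.sin_pi_div_two, mul_one, Real.cosh_add_sinh]
  have hbot : zeta p hp (-(Real.pi/2)) = vpt' 0 (-p) := by
    apply UpperHalfPlane.ext'
    · show Real.sinh p * Real.cos (-(Real.pi/2)) = 0
      rw [Real.cos_neg, Real.cos_pi_div_two, mul_zero]
    · show Real.cosh p + Real.sinh p * Real.sin (-(Real.pi/2)) = Real.exp (-p)
      rw [Real.sin_neg, Real.sin_pi_div_two, ← Real.cosh_sub_sinh]; ring
  have hGtop : G (Real.pi/2) = Real.cosh (|D - p|) := by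
    rw [← hG, htop, vpt'_dist]
  have hGbot : G (-(Real.pi/2)) = Real.cosh (D + p) := by
    rw [← hG, hbot, vpt'_dist, sub_neg_eq_add, abs_of_nonneg hDp]
  have hmem : Real.cosh q ∈ Set.Icc (G (Real.pi/2)) (G (-(Real.pi/2))) := by
    rw [hGtop, hGbot]
    constructor
    · rw [Real.cosh_le_cosh, abs_abs, abs_of_nonneg hq]
      exact abs_le.2 ⟨by linarith, h2⟩
    · rw [Real.cosh_le_cosh, abs_of_nonneg hq, abs_of_nonneg hDp]
      exact h1
  have hpi : -(Real.pi/2) ≤ Real.pi/2 := by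
    have := Real.pi_pos; linarith
  obtain ⟨θ₀, _, hθ₀⟩ := intermediate_value_Icc' hpi hGcont.continuousOn hmem
  refine ⟨zeta p hp θ₀, ?_, ?_⟩
  · exact hyp_dist_eq_of_cosh hp (hC1 θ₀)
  · exact hyp_dist_eq_of_cosh hq (by rw [hG, hθ₀])

lemma exp_lb : (1.96597:ℝ) ≤ Real.exp 0.676 := by
  have h := Real.sum_le_exp_of_nonneg (by norm_num : (0:ℝ) ≤ 0.676) 9
  refine le_trans ?_ h
  norm_num [Finset.sum_range_succ, Nat.factorial]

lemma poly_key (A : ℝ) (hA : 1.96597 ≤ A) : A^5 + A^4 + A^3 + A^2 + A ≤ A^6 := by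
  nlinarith [sq_nonneg A, sq_nonneg (A - 1.96597), sq_nonneg (A^2 - 1.96597*A),
    sq_nonneg (A^2 - 1.96597^2), pow_le_pow_left₀ (by norm_num : (0:ℝ) ≤ 1.96597) hA 2,
    sq_nonneg (A^3 - 1.96597*A^2)]

lemma key_ineq (t m : ℝ) (ht : 2.028 ≤ t) (hm : 0 ≤ m) (hmt : m ≤ t) :
    Real.exp (2*m/3) * Real.cosh (t - m) ≤ Real.cosh t := by
  set A := Real.exp (t/3) with hAdef
  set y := Real.exp (m/3) with hydef
  have hy1 : (1:ℝ) ≤ y := by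
    rw [hydef, show (1:ℝ) = Real.exp 0 from (Real.exp_zero).symm]
    exact Real.exp_le_exp.2 (by linarith)
  have hyA : y ≤ A := Real.exp_le_exp.2 (by linarith)
  have hA0 : (0:ℝ) < A := Real.exp_pos _
  have hy0 : (0:ℝ) < y := Real.exp_pos _
  have hAlb : (1.96597:ℝ) ≤ A := by
    refine le_trans exp_lb (Real.exp_le_exp.2 (by linarith))
  have hSig : y^5 + y^4 + y^3 + y^2 + y ≤ A^6 := by
    have h0 : (0:ℝ) ≤ y := le_of_lt hy0
    have h5 := pow_le_pow_left₀ h0 hyA 5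
    have h4 := pow_le_pow_left₀ h0 hyA 4
    have h3 := pow_le_pow_left₀ h0 hyA 3
    have h2 := pow_le_pow_left₀ h0 hyA 2
    have h1 := pow_le_pow_left₀ h0 hyA 1
    have := poly_key A hAlb
    simp only [pow_one] at h1
    linarith
  have hpoly : A^6 + y^6 ≤ A^6 * y + y := by
    nlinarith [mul_nonneg (sub_nonneg.2 hy1) (sub_nonneg.2 hSig)]
  have e1 : Real.exp t = A^3 := by
    rw [hAdef, ← Real.exp_nat_mul]; norm_num; ring
  have e2 : Real.exp m = y^3 := by
    rw [hydef, ← Real.exp_nat_mul]; norm_num; ring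
  have e3 : Real.exp (t - m) = A^3 / y^3 := by rw [Real.exp_sub, e1, e2]
  have e4 : Real.exp (2*m/3) = y^2 := by
    rw [hydef, ← Real.exp_nat_mul]; norm_num; ring
  have hbig : Real.cosh t - Real.exp (2*m/3) * Real.cosh (t-m)
      = (A^6*y + y - A^6 - y^6)/(2*A^3*y) := by
    rw [Real.cosh_eq, Real.cosh_eq, Real.exp_neg, Real.exp_neg, e1, e3, e4]
    field_simp
    ring
  have hnn : (0:ℝ) ≤ (A^6*y + y - A^6 - y^6)/(2*A^3*y) :=
    div_nonneg (by linarith) (by positivity)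
  linarith [hbig, hnn]

lemma final_ineq (D u : ℝ) (hD : 4.056 ≤ D) (hu0 : 0 ≤ u) (huD : u ≤ D) :
    Real.exp (2/3 * min u (D - u)) * (Real.sinh (D - u) + Real.sinh u) ≤ Real.sinh D := by
  have key2 : ∀ a b : ℝ, Real.sinh (a+b) + Real.sinh (a-b) = 2*Real.sinh a*Real.cosh b := by
    intro a b; rw [Real.sinh_add, Real.sinh_sub]; ring
  have id1 : Real.sinh (D - u) + Real.sinh u = 2*Real.sinh (D/2)*Real.cosh (D/2 - u) := by
    have h := key2 (D/2) (D/2 - u)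
    rw [show D/2 + (D/2 - u) = D - u by ring, show D/2 - (D/2 - u) = u by ring] at h
    exact h
  have id2 : Real.sinh D = 2*Real.sinh (D/2)*Real.cosh (D/2) := by
    have h := key2 (D/2) (D/2)
    rw [show D/2 + D/2 = D by ring, sub_self, Real.sinh_zero, add_zero] at h
    exact h
  have hs2 : 0 ≤ Real.sinh (D/2) := Real.sinh_nonneg_iff.2 (by linarith)
  have ht : (2.028:ℝ) ≤ D/2 := by linarith
  rcases min_cases u (D - u) with ⟨hmin, hle⟩ | ⟨hmin, hle⟩
  · have hk := key_ineq (D/2) u ht hu0 (by linarith)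
    rw [id1, id2, hmin]
    have e : (2:ℝ)/3 * u = 2*u/3 := by ring
    rw [e]
    nlinarith [mul_le_mul_of_nonneg_left hk hs2]
  · have hk := key_ineq (D/2) (D - u) ht (by linarith) (by linarith)
    have hco : Real.cosh (D/2 - (D - u)) = Real.cosh (D/2 - u) := by
      rw [show D/2 - (D - u) = -(D/2 - u) by ring, Real.cosh_neg]
    rw [hco] at hk
    rw [id1, id2, hmin]
    have e : (2:ℝ)/3 * (D - u) = 2*(D-u)/3 := by ring
    rw [e]
    nlinarith [mul_le_mul_of_nonneg_left hk hs2]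

end Helpers

/-- Lemma 2.12: let `H = {y | bus y ≥ s}` be the horoball of a CAT(-1) space determined
by the Busemann (height) function `bus` of the geodesic ray `ρ`, and `c₀(∞) = 4.056`.
For `a, b ∈ ∂H` with `d(a,b) ≥ c₀(∞)`, every point `a₀ = γ u` of the geodesic segment
`[a,b]` lies in the shrunk horoball `H[(2/3) min{d(a₀,a), d(a₀,b)}]`. -/
theorem stmt_5 {X : Type*} [MetricSpace X] [ProperSpace X]
    (hcat : CATNegOne X) (hgeod : GeodesicSpace X)
    (ρ : ℝ → X) (hρ : IsGeodOn ρ (Set.Ici 0))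
    (bus : X → ℝ)
    (hbus : ∀ y : X, Filter.Tendsto (fun t => t - dist y (ρ t)) Filter.atTop (nhds (bus y)))
    (s : ℝ) (a b : X) (ha : bus a = s) (hb : bus b = s)
    (hab : dist a b ≥ 4.056)
    (γ : ℝ → X) (hγ : IsGeodesicFrom γ a b)
    (u : ℝ) (hu : u ∈ Set.Icc 0 (dist a b)) :
    bus (γ u) ≥ s + (2/3) * min (dist (γ u) a) (dist (γ u) b) := by
  classical
  have hD0 : (0:ℝ) < dist a b := lt_of_lt_of_le (by norm_num) hab
  have hγ0 : γ 0 = a := hγ.2.1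
  have hγD : γ (dist a b) = b := hγ.2.2
  have hmem0 : (0:ℝ) ∈ Set.Icc (0:ℝ) (dist a b) := ⟨le_refl _, dist_nonneg⟩
  have hmemD : dist a b ∈ Set.Icc (0:ℝ) (dist a b) := ⟨dist_nonneg, le_refl _⟩
  have hda : dist (γ u) a = u := by
    rw [← hγ0, hγ.1 u hu 0 hmem0, sub_zero, abs_of_nonneg hu.1]
  have hdb : dist (γ u) b = dist a b - u := by
    have h := hγ.1 u hu (dist a b) hmemD
    rw [hγD] at h
    rw [h, abs_of_nonpos (by linarith [hu.2])]
    ring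
  rw [hda, hdb]
  rcases eq_or_lt_of_le hu.1 with hu0 | hu0
  · have hga : γ u = a := by rw [← hu0, hγ0]
    rw [hga, ha, ← hu0, sub_zero, min_eq_left dist_nonneg]
    simp
  rcases eq_or_lt_of_le hu.2 with huD | huD
  · have hgb : γ u = b := by rw [huD, hγD]
    rw [hgb, hb, huD, sub_self, min_eq_right dist_nonneg]
    simp
  -- main case 0 < u < dist a b
  set D := dist a b with hDdef
  have hsu : 0 < Real.sinh u := Real.sinh_pos_iff.2 hu0
  have hsdu : 0 < Real.sinh (D - u) := Real.sinh_pos_iff.2 (by linarith)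
  have hsD : 0 < Real.sinh D := Real.sinh_pos_iff.2 hD0
  set w := γ u with hwdef
  set R : ℝ → ℝ := fun T =>
    (Real.sinh (D - u) * Real.cosh (dist a (ρ T)) + Real.sinh u * Real.cosh (dist b (ρ T)))
      / Real.sinh D with hRdef
  have hRpos : ∀ T, 0 < R T := by
    intro T
    apply div_pos _ hsD
    nlinarith [Real.cosh_pos (dist a (ρ T)), Real.cosh_pos (dist b (ρ T))]
  have hkey : ∀ T : ℝ, Real.cosh (dist w (ρ T)) ≤ R T := by
    intro T
    set z := ρ T with hzdef
    obtain ⟨g, hg⟩ := hgeod a z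
    have t1 : dist b z ≤ D + dist a z := by
      calc dist b z ≤ dist b a + dist a z := dist_triangle b a z
        _ = D + dist a z := by rw [dist_comm b a]
    have t2 : D - dist a z ≤ dist b z := by
      have h := dist_triangle a z b
      rw [dist_comm z b] at h
      linarith
    have t3 : dist a z - D ≤ dist b z := by
      have h := dist_triangle a b z
      linarith
    obtain ⟨z', hz1, hz2⟩ := exists_comp D (dist a z) (dist b z) dist_nonneg dist_nonneg t1 t2 t3
    have hxy' : dist (vpt' 0 0) (vpt' 0 D) = D := by
      rw [vpt'_dist, zero_sub, abs_neg, abs_of_nonneg hD0.le]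
    have hf' : IsGeodesicFrom (fun t => vpt' 0 t) (vpt' 0 0) (vpt' 0 D) := by
      refine ⟨fun s _ t _ => vpt'_dist 0 s t, rfl, by rw [hxy']⟩
    obtain ⟨g', hg'⟩ := exists_geodesic (vpt' 0 0) z'
    have hcmp := hcat a b z γ g hγ hg (vpt' 0 0) (vpt' 0 D) z'
      (by rw [hxy']) hz1 hz2 _ _ hf' hg' u hu (dist a z) ⟨dist_nonneg, le_refl _⟩
    rw [hg.2.2] at hcmp
    have hgz : g' (dist a z) = z' := by
      have h := hg'.2.2
      rwa [hz1] at h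
    rw [hgz] at hcmp
    have hmono : Real.cosh (dist w z) ≤ Real.cosh (dist (vpt' 0 u) z') := by
      rw [Real.cosh_le_cosh, abs_of_nonneg dist_nonneg, abs_of_nonneg dist_nonneg]
      exact hcmp
    calc Real.cosh (dist w z) ≤ Real.cosh (dist (vpt' 0 u) z') := hmono
      _ = R T := by rw [interp z' D u _ _ hD0 hz1 hz2]
  set L := (Real.sinh (D - u) + Real.sinh u) / Real.sinh D with hLdef
  have hLpos : 0 < L := div_pos (by linarith) hsD
  have hta : Filter.Tendsto (fun T => T - dist a (ρ T)) Filter.atTop (nhds s) := by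
    rw [← ha]; exact hbus a
  have htb : Filter.Tendsto (fun T => T - dist b (ρ T)) Filter.atTop (nhds s) := by
    rw [← hb]; exact hbus b
  have hcoshlim : ∀ (x : X), Filter.Tendsto (fun T => T - dist x (ρ T)) Filter.atTop (nhds s) →
      Filter.Tendsto (fun T => 2 * Real.cosh (dist x (ρ T)) * Real.exp (-T)) Filter.atTop
        (nhds (Real.exp (-s))) := by
    intro x hx
    have h1 : Filter.Tendsto (fun T => Real.exp (dist x (ρ T) - T)) Filter.atTop
        (nhds (Real.exp (-s))) := by
      apply (Real.continuous_exp.continuousAt).tendsto.comp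
      have h := hx.neg
      simp only [neg_sub] at h
      exact h
    have hdT : Filter.Tendsto (fun T => dist x (ρ T)) Filter.atTop Filter.atTop := by
      have h2 : ∀ᶠ T in Filter.atTop, T - dist x (ρ T) < s + 1 :=
        hx.eventually_lt_const (by linarith)
      have hev : ∀ᶠ T in Filter.atTop, T + -(s+1) ≤ dist x (ρ T) :=
        h2.mono fun T hT => by linarith
      exact Filter.tendsto_atTop_mono' Filter.atTop hev
        (Filter.tendsto_atTop_add_const_right Filter.atTop (-(s+1)) Filter.tendsto_id)
    have h2 : Filter.Tendsto (fun T => Real.exp (-(dist x (ρ T)) - T)) Filter.atTop (nhds 0) := by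
      apply Real.tendsto_exp_atBot.comp
      have hsum : Filter.Tendsto (fun T => dist x (ρ T) + T) Filter.atTop Filter.atTop :=
        Filter.Tendsto.atTop_add_atTop hdT Filter.tendsto_id
      have hneg : Filter.Tendsto (fun T => -(dist x (ρ T) + T)) Filter.atTop Filter.atBot :=
        Filter.tendsto_neg_atTop_atBot.comp hsum
      apply hneg.congr
      intro T; ring
    have h3 := h1.add h2
    rw [add_zero] at h3
    apply h3.congr
    intro T
    rw [Real.cosh_eq,
      show dist x (ρ T) - T = dist x (ρ T) + -T by ring,
      show -(dist x (ρ T)) - T = -(dist x (ρ T)) + -T by ring,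
      Real.exp_add, Real.exp_add]
    ring
  have hca := hcoshlim a hta
  have hcb := hcoshlim b htb
  have hGlim : Filter.Tendsto (fun T => 2 * R T * Real.exp (-T)) Filter.atTop
      (nhds (L * Real.exp (-s))) := by
    have hptw : ∀ T, (Real.sinh (D - u) * (2 * Real.cosh (dist a (ρ T)) * Real.exp (-T)) +
         Real.sinh u * (2 * Real.cosh (dist b (ρ T)) * Real.exp (-T))) / Real.sinh D
         = 2 * R T * Real.exp (-T) := by
      intro T; rw [hRdef]; field_simp
    have h := ((hca.const_mul (Real.sinh (D - u))).add (hcb.const_mul (Real.sinh u))).div_const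
      (Real.sinh D)
    have hval : (Real.sinh (D - u) * Real.exp (-s) + Real.sinh u * Real.exp (-s)) / Real.sinh D
        = L * Real.exp (-s) := by
      rw [hLdef]; field_simp
    rw [hval] at h
    exact h.congr hptw
  have hlim2 : Filter.Tendsto (fun T => T - Real.log (2 * R T)) Filter.atTop
      (nhds (s - Real.log L)) := by
    have hGpos : (0:ℝ) < L * Real.exp (-s) := by positivity
    have hlog : Filter.Tendsto (fun T => Real.log (2 * R T * Real.exp (-T))) Filter.atTop
        (nhds (Real.log (L * Real.exp (-s)))) :=
      ((Real.continuousAt_log hGpos.ne').tendsto).comp hGlim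
    have hval : Real.log (L * Real.exp (-s)) = Real.log L - s := by
      rw [Real.log_mul hLpos.ne' (Real.exp_pos _).ne', Real.log_exp]; ring
    rw [hval] at hlog
    have h := hlog.neg
    rw [show -(Real.log L - s) = s - Real.log L by ring] at h
    apply h.congr
    intro T
    rw [Real.log_mul (by positivity : (2:ℝ) * R T ≠ 0) (Real.exp_pos _).ne', Real.log_exp]
    ring
  have hlb : s - Real.log L ≤ bus w := by
    apply le_of_tendsto_of_tendsto' hlim2 (hbus w)
    intro T
    have h1 : dist w (ρ T) ≤ Real.log (2 * R T) := by
      rw [Real.le_log_iff_exp_le (by positivity)]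
      have h2 : Real.exp (dist w (ρ T)) ≤ 2 * Real.cosh (dist w (ρ T)) := by
        rw [Real.cosh_eq]
        have := Real.exp_pos (-(dist w (ρ T)))
        linarith
      linarith [hkey T]
    linarith
  have hfin := final_ineq D u hab hu.1 hu.2
  have hlogL : Real.log L ≤ -(2/3 * min u (D - u)) := by
    rw [Real.log_le_iff_le_exp hLpos, hLdef, div_le_iff₀ hsD]
    have hexp : Real.exp (-(2/3 * min u (D-u))) * Real.exp (2/3 * min u (D-u)) = 1 := by
      rw [← Real.exp_add]; simp
    nlinarith [Real.exp_pos (-(2/3 * min u (D-u)))]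
  have : s + 2/3 * min u (D - u) ≤ bus w := by linarith
  exact this
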